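/- arXiv:0805.2416 — 3 statements merged into one kernel-verified Lean document; each statement's English description precedes it below -/
import Mathlib

section
/- The number of descents and the number of excedances are equidistributed on the symmetric group S_n: for every k, the number of permutations σ ∈ S_n with des(σ) = k equals the number of permutations with exc(σ) = k. -/
open scoped Classical
open Finset Equiv

/-- Descent set of `σ ∈ S_n` (0-based positions). -/
noncomputable def DesSet (n : ℕ) (σ : Equiv.Perm (Fin n)) : Finset ℕ :=
  (Finset.range n).filter fun i =>
    ∃ (h1 : i < n) (h2 : i + 1 < n), σ ⟨i + 1, h2⟩ < σ ⟨i, h1⟩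

/-- Descent number. -/
noncomputable def des (n : ℕ) (σ : Equiv.Perm (Fin n)) : ℕ := (DesSet n σ).card

/-- Excedance number. -/
noncomputable def exc (n : ℕ) (σ : Equiv.Perm (Fin n)) : ℕ :=
  ((Finset.range n).filter fun i => ∃ h : i < n, i < (σ ⟨i, h⟩ : ℕ)).card


namespace DEX
variable {m : ℕ}

/-- extend a permutation of `Fin m` to `Fin (m+1)` fixing `last`. -/
noncomputable def ext (τ : Perm (Fin m)) : Perm (Fin (m+1)) :=
  τ.viaFintypeEmbedding (Fin.castSuccEmb)

lemma ext_castSucc (τ : Perm (Fin m)) (x : Fin m) :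
    ext τ x.castSucc = (τ x).castSucc :=
  Equiv.Perm.viaFintypeEmbedding_apply_image τ _ x

lemma ext_last (τ : Perm (Fin m)) : ext τ (Fin.last m) = Fin.last m := by
  apply Equiv.Perm.viaFintypeEmbedding_apply_notMem_range
  rintro ⟨x, hx⟩
  exact absurd (congrArg Fin.val hx) (by simp [Fin.castSuccEmb]; omega)

lemma ext_apply_of_lt (τ : Perm (Fin m)) {j : Fin (m+1)} (h : (j : ℕ) < m) :
    ext τ j = (τ ⟨j, h⟩).castSucc := by
  have hj : j = (Fin.castSucc ⟨j, h⟩) := by ext; simp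
  conv_lhs => rw [hj]
  rw [ext_castSucc]

lemma ext_injective : Function.Injective (ext (m := m)) := by
  intro a b h
  ext x
  have := congrArg (fun σ : Perm (Fin (m+1)) => σ x.castSucc) h
  simp only [ext_castSucc, Fin.castSucc_inj] at this
  exact congrArg Fin.val this
variable {m : ℕ}

def cycFun (i j : Fin (m+1)) : Fin (m+1) :=
  if (j : ℕ) < i then j else if (j : ℕ) = i then Fin.last m
    else ⟨(j : ℕ) - 1, by have := j.isLt; omega⟩

def cycInv (i j : Fin (m+1)) : Fin (m+1) :=
  if (j : ℕ) < i then j else if h : (j : ℕ) = m then i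
    else ⟨(j : ℕ) + 1, by have := j.isLt; omega⟩

lemma cycFun_lt {i j : Fin (m+1)} (h : (j : ℕ) < i) : cycFun i j = j := if_pos h

lemma cycFun_self {i j : Fin (m+1)} (h : (j : ℕ) = i) : cycFun i j = Fin.last m := by
  rw [cycFun, if_neg (by omega), if_pos h]

lemma cycFun_gt {i j : Fin (m+1)} (h : (i : ℕ) < j) :
    cycFun i j = ⟨(j : ℕ) - 1, by have := j.isLt; omega⟩ := by
  rw [cycFun, if_neg (by omega), if_neg (by omega)]

lemma cycInv_lt {i j : Fin (m+1)} (h : (j : ℕ) < i) : cycInv i j = j := if_pos h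

lemma cycInv_last {i j : Fin (m+1)} (h : (j : ℕ) = m) : cycInv i j = i := by
  have hi := i.isLt
  rw [cycInv, if_neg (by omega), dif_pos h]

lemma cycInv_mid {i j : Fin (m+1)} (h1 : ¬ (j : ℕ) < i) (h2 : (j : ℕ) ≠ m) :
    cycInv i j = ⟨(j : ℕ) + 1, by have := j.isLt; omega⟩ := by
  rw [cycInv, if_neg h1, dif_neg h2]

/-- the cycle sending `i ↦ last`, `j ↦ j-1` for `j > i`, fixing `j < i`. -/
def cyc (i : Fin (m+1)) : Perm (Fin (m+1)) where
  toFun := cycFun i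
  invFun := cycInv i
  left_inv j := by
    have hj := j.isLt
    have hi := i.isLt
    rcases lt_trichotomy (j : ℕ) (i : ℕ) with h | h | h
    · rw [cycFun_lt h, cycInv_lt h]
    · rw [cycFun_self h, cycInv_last (by simp), Fin.ext_iff, h]
    · rw [cycFun_gt h, cycInv_mid (by simp; omega) (by simp; omega)]
      exact Fin.ext (by simp; omega)
  right_inv j := by
    have hj := j.isLt
    have hi := i.isLt
    by_cases h : (j : ℕ) < i
    · rw [cycInv_lt h, cycFun_lt h]
    · by_cases h2 : (j : ℕ) = m
      · rw [cycInv_last h2, cycFun_self rfl, Fin.ext_iff, h2]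
        simp
      · rw [cycInv_mid h h2, cycFun_gt (by simp; omega)]
        exact Fin.ext (by simp)

lemma cyc_apply_lt (i j : Fin (m+1)) (h : (j : ℕ) < i) : cyc i j = j := cycFun_lt h

lemma cyc_apply_self (i : Fin (m+1)) : cyc i i = Fin.last m := cycFun_self rfl

lemma cyc_apply_gt (i j : Fin (m+1)) (h : (i : ℕ) < j) :
    cyc i j = ⟨(j : ℕ) - 1, by have := j.isLt; omega⟩ := cycFun_gt h

/-- value of `σ` at position `v` (as naturals). -/
noncomputable def pv (n : ℕ) (σ : Perm (Fin n)) (v : ℕ) : ℕ :=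
  if h : v < n then (σ ⟨v, h⟩ : ℕ) else 0

lemma pv_of_lt {n : ℕ} (σ : Perm (Fin n)) {v : ℕ} (h : v < n) :
    pv n σ v = (σ ⟨v, h⟩ : ℕ) := dif_pos h

lemma pv_lt {n : ℕ} (σ : Perm (Fin n)) {v : ℕ} (h : v < n) : pv n σ v < n := by
  rw [pv_of_lt σ h]; exact (σ ⟨v, h⟩).isLt

/-- the insertion operation matched to descents. -/
noncomputable def insD (τ : Perm (Fin m)) (i : Fin (m+1)) : Perm (Fin (m+1)) :=
  ext τ * cyc i

/-- the insertion operation matched to excedances. -/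
noncomputable def insE (τ : Perm (Fin m)) (i : Fin (m+1)) : Perm (Fin (m+1)) :=
  Equiv.swap (ext τ i) (Fin.last m) * ext τ

lemma insD_apply_self (τ : Perm (Fin m)) (i : Fin (m+1)) :
    insD τ i i = Fin.last m := by
  rw [insD, Perm.mul_apply, cyc_apply_self, ext_last]

lemma pv_insD_lt (τ : Perm (Fin m)) (i : Fin (m+1)) {v : ℕ} (h : v < i.val) :
    pv (m+1) (insD τ i) v = pv m τ v := by
  have hi := i.isLt
  have hv1 : v < m + 1 := by omega
  have hv : v < m := by omega
  rw [pv_of_lt _ hv1, pv_of_lt _ hv, insD, Perm.mul_apply, cyc_apply_lt _ _ h,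
    ext_apply_of_lt τ (show ((⟨v, hv1⟩ : Fin (m+1)) : ℕ) < m from hv)]
  simp

lemma pv_insD_self (τ : Perm (Fin m)) (i : Fin (m+1)) :
    pv (m+1) (insD τ i) i.val = m := by
  rw [pv_of_lt _ i.isLt]
  have : (⟨i.val, i.isLt⟩ : Fin (m+1)) = i := by ext; rfl
  rw [this, insD_apply_self]
  simp

lemma pv_insD_gt (τ : Perm (Fin m)) (i : Fin (m+1)) {v : ℕ} (h1 : i.val < v)
    (h2 : v < m + 1) : pv (m+1) (insD τ i) v = pv m τ (v - 1) := by
  have hv : v - 1 < m := by omega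
  rw [pv_of_lt _ h2, pv_of_lt _ hv, insD, Perm.mul_apply,
    cyc_apply_gt i ⟨v, h2⟩ h1,
    ext_apply_of_lt τ (show ((⟨v - 1, by omega⟩ : Fin (m+1)) : ℕ) < m from hv)]
  simp

lemma insE_apply_self (τ : Perm (Fin m)) (i : Fin (m+1)) :
    insE τ i i = Fin.last m := by
  rw [insE, Perm.mul_apply]
  by_cases hi : i.val < m
  · rw [Equiv.swap_apply_left]
  · have : i = Fin.last m := by ext; have := i.isLt; simp; omega
    rw [this, ext_last, Equiv.swap_self]
    rfl

lemma insE_apply_last (τ : Perm (Fin m)) (i : Fin (m+1)) (hi : i.val < m) :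
    insE τ i (Fin.last m) = (τ ⟨i, hi⟩).castSucc := by
  rw [insE, Perm.mul_apply, ext_last, ext_apply_of_lt τ hi, Equiv.swap_apply_right]

lemma insE_apply_ne (τ : Perm (Fin m)) (i : Fin (m+1)) (x : Fin m)
    (hx : x.castSucc ≠ i) : insE τ i x.castSucc = (τ x).castSucc := by
  rw [insE, Perm.mul_apply, ext_castSucc]
  apply Equiv.swap_apply_of_ne_of_ne
  · by_cases hi : i.val < m
    · rw [ext_apply_of_lt τ hi]
      intro hc
      apply hx
      have : x = ⟨i.val, hi⟩ := (τ.injective (Fin.castSucc_injective m hc))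
      subst this; ext; simp
    · have : i = Fin.last m := by ext; have := i.isLt; simp; omega
      rw [this, ext_last]
      exact ne_of_lt (Fin.castSucc_lt_last _)
  · exact ne_of_lt (Fin.castSucc_lt_last _)

lemma pv_insE_self (τ : Perm (Fin m)) (i : Fin (m+1)) :
    pv (m+1) (insE τ i) i.val = m := by
  rw [pv_of_lt _ i.isLt]
  have : (⟨i.val, i.isLt⟩ : Fin (m+1)) = i := by ext; rfl
  rw [this, insE_apply_self]
  simp

lemma pv_insE_ne (τ : Perm (Fin m)) (i : Fin (m+1)) {v : ℕ} (hv : v < m)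
    (hvi : v ≠ i.val) : pv (m+1) (insE τ i) v = pv m τ v := by
  rw [pv_of_lt _ (by omega : v < m + 1), pv_of_lt _ hv]
  have hcs : (⟨v, by omega⟩ : Fin (m+1)) = (Fin.castSucc ⟨v, hv⟩) := by ext; simp
  rw [hcs, insE_apply_ne τ i ⟨v, hv⟩ (by intro hc; apply hvi; rw [← hc]; simp)]
  simp


/-- Excedance set. -/
noncomputable def ExcSet (n : ℕ) (σ : Perm (Fin n)) : Finset ℕ :=
  (Finset.range n).filter fun i => ∃ h : i < n, i < (σ ⟨i, h⟩ : ℕ)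

lemma exc_eq_card (n : ℕ) (σ : Perm (Fin n)) : exc n σ = (ExcSet n σ).card := rfl

lemma mem_desSet {n v : ℕ} {σ : Perm (Fin n)} :
    v ∈ DesSet n σ ↔ v + 1 < n ∧ pv n σ (v+1) < pv n σ v := by
  unfold DesSet
  rw [mem_filter, mem_range]
  constructor
  · rintro ⟨hv, h1, h2, hlt⟩
    refine ⟨h2, ?_⟩
    rw [pv_of_lt _ h2, pv_of_lt _ h1]
    exact hlt
  · rintro ⟨h2, hlt⟩
    have h1 : v < n := by omega
    rw [pv_of_lt _ h2, pv_of_lt _ h1] at hlt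
    exact ⟨h1, h1, h2, hlt⟩

lemma mem_excSet {n v : ℕ} {σ : Perm (Fin n)} :
    v ∈ ExcSet n σ ↔ v < n ∧ v < pv n σ v := by
  unfold ExcSet
  rw [mem_filter, mem_range]
  constructor
  · rintro ⟨hv, h1, hlt⟩
    exact ⟨h1, by rw [pv_of_lt _ h1]; exact hlt⟩
  · rintro ⟨h1, hlt⟩
    rw [pv_of_lt _ h1] at hlt
    exact ⟨h1, h1, hlt⟩

lemma desSet_subset {n : ℕ} {σ : Perm (Fin n)} {v : ℕ} (h : v ∈ DesSet n σ) :
    v + 1 < n := (mem_desSet.mp h).1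

lemma excSet_subset {n : ℕ} {σ : Perm (Fin n)} {v : ℕ} (h : v ∈ ExcSet n σ) :
    v < n := (mem_excSet.mp h).1

lemma mem_desSet_insD (τ : Perm (Fin m)) (i : Fin (m+1)) (v : ℕ) :
    v ∈ DesSet (m+1) (insD τ i) ↔
      ((v + 1 < i.val ∧ v ∈ DesSet m τ) ∨ (v = i.val ∧ v < m) ∨
        (i.val < v ∧ v - 1 ∈ DesSet m τ)) := by
  have hi := i.isLt
  simp only [mem_desSet]
  rcases lt_trichotomy (v+1) i.val with h | h | h
  · rw [pv_insD_lt τ i h, pv_insD_lt τ i (by omega)]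
    omega
  · have hv : v < i.val := by omega
    have hvm : v < m := by omega
    rw [h, pv_insD_self τ i, pv_insD_lt τ i hv]
    have := pv_lt τ hvm
    omega
  · by_cases hvi : v = i.val
    · by_cases hvm : v < m
      · rw [hvi, pv_insD_self τ i]
        rw [← hvi, pv_insD_gt τ i (by omega) (by omega), Nat.add_sub_cancel]
        have := pv_lt τ hvm
        omega
      · constructor
        · rintro ⟨h1, -⟩; omega
        · rintro (⟨h1, -⟩ | ⟨-, h2⟩ | ⟨h1, -⟩) <;> omega
    · have hiv : i.val < v := by omega
      by_cases hvm : v < m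
      · rw [pv_insD_gt τ i hiv (by omega), pv_insD_gt τ i (by omega) (by omega),
          Nat.add_sub_cancel, show v - 1 + 1 = v from by omega]
        omega
      · constructor
        · rintro ⟨h1, -⟩; omega
        · rintro (⟨h1, -⟩ | ⟨h1, -⟩ | ⟨-, h2, -⟩) <;> omega

lemma mem_excSet_insE (τ : Perm (Fin m)) (i : Fin (m+1)) (v : ℕ) :
    v ∈ ExcSet (m+1) (insE τ i) ↔
      ((v = i.val ∧ v < m) ∨ (v ≠ i.val ∧ v ∈ ExcSet m τ)) := by
  have hi := i.isLt
  simp only [mem_excSet]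
  by_cases hvi : v = i.val
  · rw [hvi, pv_insE_self τ i]
    omega
  · by_cases hvm : v < m
    · rw [pv_insE_ne τ i hvm hvi]
      omega
    · by_cases hv1 : v < m + 1
      · have := pv_lt (insE τ i) hv1
        omega
      · constructor
        · rintro ⟨h1, -⟩; omega
        · rintro (⟨-, h2⟩ | ⟨-, h2, -⟩) <;> omega

lemma exc_insE (τ : Perm (Fin m)) (i : Fin (m+1)) :
    exc (m+1) (insE τ i)
      = if (i.val = m ∨ i.val ∈ ExcSet m τ) then exc m τ else exc m τ + 1 := by
  have hi := i.isLt
  rw [exc_eq_card, exc_eq_card]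
  by_cases him : i.val < m
  · have hset : ExcSet (m+1) (insE τ i) = insert i.val ((ExcSet m τ).erase i.val) := by
      ext v
      rw [mem_excSet_insE, mem_insert, mem_erase]
      constructor
      · rintro (⟨rfl, -⟩ | ⟨hne, hmem⟩)
        · exact Or.inl rfl
        · exact Or.inr ⟨hne, hmem⟩
      · rintro (rfl | ⟨hne, hmem⟩)
        · exact Or.inl ⟨rfl, him⟩
        · exact Or.inr ⟨hne, hmem⟩
    rw [hset, card_insert_of_notMem (fun h => (mem_erase.mp h).1 rfl)]
    by_cases hmem : i.val ∈ ExcSet m τ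
    · rw [if_pos (Or.inr hmem), card_erase_of_mem hmem]
      have : 1 ≤ (ExcSet m τ).card := card_pos.mpr ⟨i.val, hmem⟩
      omega
    · rw [if_neg (by rintro (h | h); omega; exact hmem h), erase_eq_of_notMem hmem]
  · have him' : i.val = m := by omega
    have hset : ExcSet (m+1) (insE τ i) = ExcSet m τ := by
      ext v
      rw [mem_excSet_insE]
      constructor
      · rintro (⟨rfl, hlt⟩ | ⟨-, hmem⟩)
        · omega
        · exact hmem
      · intro hmem
        exact Or.inr ⟨fun h => by have := excSet_subset hmem; omega, hmem⟩
    rw [hset, if_pos (Or.inl him')]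

lemma des_insD (τ : Perm (Fin m)) (i : Fin (m+1)) :
    des (m+1) (insD τ i)
      = if (i.val = m ∨ i.val ∈ (DesSet m τ).image (· + 1)) then des m τ
        else des m τ + 1 := by
  classical
  have hi := i.isLt
  set D := DesSet m τ with hD
  have hB : ∀ v : ℕ, v ∈ (D.filter fun q => i.val ≤ q).image (· + 1) ↔
      (i.val < v ∧ v - 1 ∈ D) := by
    intro v
    simp only [mem_image, mem_filter]
    constructor
    · rintro ⟨q, ⟨hq, hiq⟩, rfl⟩
      exact ⟨by omega, by simpa using hq⟩
    · rintro ⟨h1, h2⟩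
      exact ⟨v - 1, ⟨h2, by omega⟩, by omega⟩
  have hset : DesSet (m+1) (insD τ i)
      = ((D.filter fun q => q + 1 < i.val) ∪ (D.filter fun q => i.val ≤ q).image (· + 1))
        ∪ (if i.val < m then ({i.val} : Finset ℕ) else ∅) := by
    ext v
    rw [mem_desSet_insD, mem_union, mem_union, hB v, mem_filter]
    by_cases him : i.val < m
    · simp only [if_pos him, mem_singleton]
      simp only [hD, mem_desSet]
      omega
    · simp only [if_neg him, notMem_empty]
      simp only [hD, mem_desSet]
      constructor
      · rintro (⟨a, b, c⟩ | ⟨a, b⟩ | ⟨a, b, c⟩)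
        · exact Or.inl (Or.inl ⟨⟨b, c⟩, a⟩)
        · omega
        · exact Or.inl (Or.inr ⟨a, b, c⟩)
      · rintro ((⟨⟨a, b⟩, c⟩ | ⟨a, b, c⟩) | h)
        · exact Or.inl ⟨c, a, b⟩
        · exact Or.inr (Or.inr ⟨a, b, c⟩)
        · exact h.elim
  have hd1 : Disjoint (D.filter fun q => q + 1 < i.val)
      ((D.filter fun q => i.val ≤ q).image (· + 1)) := by
    rw [disjoint_left]
    intro v hv hv'
    rw [mem_filter] at hv
    rw [hB v] at hv'
    omega
  have hd2 : Disjoint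
      ((D.filter fun q => q + 1 < i.val) ∪ (D.filter fun q => i.val ≤ q).image (· + 1))
      (if i.val < m then ({i.val} : Finset ℕ) else ∅) := by
    rw [disjoint_right]
    intro v hv hv'
    by_cases him : i.val < m
    · rw [if_pos him, mem_singleton] at hv
      rw [mem_union, mem_filter, hB v] at hv'
      omega
    · rw [if_neg him] at hv
      exact notMem_empty v hv
  have hcB : ((D.filter fun q => i.val ≤ q).image (· + 1)).card
      = (D.filter fun q => i.val ≤ q).card :=
    card_image_of_injective _ (fun a b h => by omega)
  -- partition of D
  have hpart : (D.filter fun q => q + 1 < i.val).card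
      + (D.filter fun q => i.val ≤ q).card
      + (D.filter fun q => q + 1 = i.val).card = D.card := by
    have e1 : (D.filter fun q => q + 1 < i.val) ∪ (D.filter fun q => i.val ≤ q)
        ∪ (D.filter fun q => q + 1 = i.val) = D := by
      ext q
      simp only [mem_union, mem_filter]
      constructor
      · rintro ((⟨h, -⟩ | ⟨h, -⟩) | ⟨h, -⟩) <;> exact h
      · intro hq
        rcases lt_trichotomy (q + 1) i.val with h | h | h
        · exact Or.inl (Or.inl ⟨hq, h⟩)
        · exact Or.inr ⟨hq, h⟩
        · exact Or.inl (Or.inr ⟨hq, by omega⟩)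
    have d1 : Disjoint (D.filter fun q => q + 1 < i.val) (D.filter fun q => i.val ≤ q) := by
      rw [disjoint_left]; intro q h h'
      rw [mem_filter] at h h'; omega
    have d2 : Disjoint ((D.filter fun q => q + 1 < i.val) ∪ (D.filter fun q => i.val ≤ q))
        (D.filter fun q => q + 1 = i.val) := by
      rw [disjoint_left]; intro q h h'
      rw [mem_union, mem_filter, mem_filter] at h
      rw [mem_filter] at h'; omega
    rw [← card_union_of_disjoint d1, ← card_union_of_disjoint d2, e1]
  rw [des, hset, card_union_of_disjoint hd2, card_union_of_disjoint hd1, hcB]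
  by_cases hmem : i.val ∈ D.image (· + 1)
  · rw [if_pos (Or.inr hmem)]
    rw [mem_image] at hmem
    obtain ⟨q, hq, hqe⟩ := hmem
    have hqm : q + 1 < m := desSet_subset hq
    have him : i.val < m := by omega
    have hM : (D.filter fun r => r + 1 = i.val) = {q} := by
      ext r
      rw [mem_filter, mem_singleton]
      constructor
      · rintro ⟨hr, hre⟩; omega
      · rintro rfl; exact ⟨hq, hqe⟩
    rw [if_pos him, card_singleton]
    rw [hM, card_singleton] at hpart
    rw [des, ← hD]
    omega
  · have hM : (D.filter fun r => r + 1 = i.val) = ∅ := by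
      apply filter_false_of_mem
      intro r hr hre
      exact hmem (mem_image.mpr ⟨r, hr, hre⟩)
    rw [hM, card_empty] at hpart
    by_cases him : i.val < m
    · have hcond : ¬(i.val = m ∨ i.val ∈ D.image (· + 1)) := by
        push_neg
        exact ⟨by omega, hmem⟩
      rw [if_pos him, card_singleton, if_neg hcond]
      rw [des, ← hD]
      omega
    · rw [if_pos (Or.inl (by omega)), if_neg him, card_empty]
      rw [des, ← hD]
      omega

lemma insD_bijective :
    Function.Bijective (fun p : Perm (Fin m) × Fin (m+1) => insD p.1 p.2) := by
  rw [Fintype.bijective_iff_injective_and_card]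
  constructor
  · rintro ⟨τ, i⟩ ⟨τ', i'⟩ h
    simp only at h
    have hii : i = i' := by
      apply (insD τ' i').injective
      have h1 : (insD τ' i') i' = Fin.last m := insD_apply_self τ' i'
      have h2 : (insD τ' i') i = Fin.last m := by rw [← h]; exact insD_apply_self τ i
      rw [h1, h2]
    subst hii
    have hτ : ext τ = ext τ' := mul_right_cancel (h : ext τ * cyc i = ext τ' * cyc i)
    rw [ext_injective hτ]
  · rw [Fintype.card_prod, Fintype.card_perm, Fintype.card_perm, Fintype.card_fin,
      Fintype.card_fin, Nat.factorial_succ, mul_comm]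

lemma insE_bijective :
    Function.Bijective (fun p : Perm (Fin m) × Fin (m+1) => insE p.1 p.2) := by
  rw [Fintype.bijective_iff_injective_and_card]
  constructor
  · rintro ⟨τ, i⟩ ⟨τ', i'⟩ h
    simp only at h
    have hii : i = i' := by
      apply (insE τ' i').injective
      have h1 : (insE τ' i') i' = Fin.last m := insE_apply_self τ' i'
      have h2 : (insE τ' i') i = Fin.last m := by rw [← h]; exact insE_apply_self τ i
      rw [h1, h2]
    subst hii
    have happ : ∀ z, insE τ i z = insE τ' i z := fun z => by rw [h]
    have hτ : τ = τ' := by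
      apply Equiv.ext
      intro x
      by_cases hx : x.castSucc = i
      · have hi : i.val < m := by rw [← hx]; simp
        have h1 := insE_apply_last τ i hi
        have h2 := insE_apply_last τ' i hi
        have hcc := h1.symm.trans ((happ _).trans h2)
        have := Fin.castSucc_injective m hcc
        have hxe : x = ⟨i.val, hi⟩ := by ext; simpa using congrArg Fin.val hx
        rw [hxe, this]
      · have h1 := insE_apply_ne τ i x hx
        have h2 := insE_apply_ne τ' i x hx
        rw [happ _] at h1
        exact Fin.castSucc_injective m (h1.symm.trans h2)
    rw [hτ]
  · rw [Fintype.card_prod, Fintype.card_perm, Fintype.card_perm, Fintype.card_fin,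
      Fintype.card_fin, Nat.factorial_succ, mul_comm]

lemma card_filter_fin (n : ℕ) (p : ℕ → Prop) :
    (((Finset.univ : Finset (Fin n))).filter fun j => p j.val).card
      = ((range n).filter p).card := by
  classical
  apply Finset.card_bij (fun j _ => j.val)
  · intro a ha
    rw [mem_filter] at ha ⊢
    exact ⟨mem_range.mpr a.isLt, ha.2⟩
  · intro a _ b _ hab
    exact Fin.ext hab
  · intro b hb
    rw [mem_filter, mem_range] at hb
    exact ⟨⟨b, hb.1⟩, mem_filter.mpr ⟨mem_univ _, hb.2⟩, rfl⟩

lemma count_shape (S : Finset ℕ) (hS : ∀ v ∈ S, v < m) (s : ℕ) (hcard : S.card = s)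
    (F : Fin (m+1) → ℕ)
    (hF : ∀ i : Fin (m+1), F i = if (i.val = m ∨ i.val ∈ S) then s else s + 1)
    (k : ℕ) :
    ((Finset.univ : Finset (Fin (m+1))).filter fun i => F i = k).card
      = if s = k then s + 1 else if s + 1 = k then m - s else 0 := by
  classical
  have h2 : ((Finset.univ : Finset (Fin (m+1))).filter fun i => F i = k).card
      = ((range (m+1)).filter
          (fun v => (if (v = m ∨ v ∈ S) then s else s + 1) = k)).card := by
    apply Finset.card_bij (fun j _ => j.val)
    · intro a ha
      rw [mem_filter] at ha ⊢
      refine ⟨mem_range.mpr a.isLt, ?_⟩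
      rw [← hF a]
      exact ha.2
    · intro a _ b _ hab
      exact Fin.ext hab
    · intro b hb
      rw [mem_filter, mem_range] at hb
      exact ⟨⟨b, hb.1⟩, mem_filter.mpr ⟨mem_univ _, by rw [hF ⟨b, hb.1⟩]; exact hb.2⟩, rfl⟩
  rw [h2]
  by_cases hsk : s = k
  · rw [if_pos hsk]
    have he : (range (m+1)).filter (fun v => (if (v = m ∨ v ∈ S) then s else s + 1) = k)
        = insert m S := by
      ext v
      simp only [mem_filter, mem_range, mem_insert]
      constructor
      · rintro ⟨hv, hval⟩
        by_cases hc : (v = m ∨ v ∈ S)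
        · exact hc
        · rw [if_neg hc] at hval; omega
      · intro hc
        refine ⟨?_, by rw [if_pos hc]; omega⟩
        rcases hc with rfl | hv
        · omega
        · have := hS v hv; omega
    rw [he, card_insert_of_notMem (fun hm => lt_irrefl m (hS m hm)), hcard]
  · rw [if_neg hsk]
    by_cases hsk1 : s + 1 = k
    · rw [if_pos hsk1]
      have hsub : insert m S ⊆ range (m+1) := by
        intro v hv
        rw [mem_insert] at hv
        rw [mem_range]
        rcases hv with rfl | hv
        · omega
        · have := hS v hv; omega
      have he : (range (m+1)).filter (fun v => (if (v = m ∨ v ∈ S) then s else s + 1) = k)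
          = range (m+1) \ insert m S := by
        ext v
        simp only [mem_filter, mem_range, mem_sdiff, mem_insert]
        constructor
        · rintro ⟨hv, hval⟩
          refine ⟨hv, fun hc => ?_⟩
          rw [if_pos hc] at hval; omega
        · rintro ⟨hv, hc⟩
          refine ⟨hv, by rw [if_neg hc]; omega⟩
      rw [he, card_sdiff_of_subset hsub, card_insert_of_notMem (fun hm => lt_irrefl m (hS m hm)),
        hcard, card_range]
      omega
    · rw [if_neg hsk1]
      rw [Finset.card_eq_zero]
      apply filter_false_of_mem
      intro v _ hval
      by_cases hc : (v = m ∨ v ∈ S)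
      · rw [if_pos hc] at hval; omega
      · rw [if_neg hc] at hval; omega

lemma step_count (g : Perm (Fin (m+1)) → ℕ) (f : Perm (Fin m) → ℕ)
    (ins : Perm (Fin m) → Fin (m+1) → Perm (Fin (m+1)))
    (hbij : Function.Bijective fun p : Perm (Fin m) × Fin (m+1) => ins p.1 p.2)
    (hcnt : ∀ (τ : Perm (Fin m)) (k : ℕ),
      ((Finset.univ : Finset (Fin (m+1))).filter fun i => g (ins τ i) = k).card
        = if f τ = k then f τ + 1 else if f τ + 1 = k then m - f τ else 0)
    (k : ℕ) :
    ((Finset.univ : Finset (Perm (Fin (m+1)))).filter fun σ => g σ = k).card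
      = (k+1) * ((Finset.univ : Finset (Perm (Fin m))).filter fun τ => f τ = k).card
        + (if k = 0 then 0
            else (m + 1 - k) *
              ((Finset.univ : Finset (Perm (Fin m))).filter fun τ => f τ = k - 1).card) := by
  classical
  set e := Equiv.ofBijective _ hbij with he
  have h1 : ((Finset.univ : Finset (Perm (Fin (m+1)))).filter fun σ => g σ = k).card
      = ((Finset.univ : Finset (Perm (Fin m) × Fin (m+1))).filter
          fun p => g (ins p.1 p.2) = k).card := by
    symm
    apply Finset.card_bij (fun p _ => ins p.1 p.2)
    · intro a ha
      rw [mem_filter] at ha ⊢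
      exact ⟨mem_univ _, ha.2⟩
    · intro a _ b _ hab
      exact hbij.1 hab
    · intro b hb
      rw [mem_filter] at hb
      obtain ⟨p, hp⟩ := hbij.2 b
      exact ⟨p, mem_filter.mpr ⟨mem_univ _, by rw [show ins p.1 p.2 = b from hp]; exact hb.2⟩, hp⟩
  have h2 : ((Finset.univ : Finset (Perm (Fin m) × Fin (m+1))).filter
        fun p => g (ins p.1 p.2) = k).card
      = ∑ τ : Perm (Fin m),
          ((Finset.univ : Finset (Fin (m+1))).filter fun i => g (ins τ i) = k).card := by
    rw [Finset.card_eq_sum_card_fiberwise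
      (f := Prod.fst) (t := Finset.univ) (fun x _ => mem_univ _)]
    refine Finset.sum_congr rfl fun τ _ => ?_
    apply Finset.card_bij (fun p _ => p.2)
    · intro a ha
      simp only [mem_filter] at ha ⊢
      refine ⟨mem_univ _, ?_⟩
      rw [← ha.2]
      rw [ha.1.2]
    · intro a ha b hb hab
      simp only [mem_filter] at ha hb
      exact Prod.ext (ha.2.trans hb.2.symm) hab
    · intro i hi
      rw [mem_filter] at hi
      exact ⟨(τ, i), mem_filter.mpr ⟨mem_filter.mpr ⟨mem_univ _, hi.2⟩, rfl⟩, rfl⟩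
  rw [h1, h2]
  have h3 : ∀ τ : Perm (Fin m),
      ((Finset.univ : Finset (Fin (m+1))).filter fun i => g (ins τ i) = k).card
        = (if f τ = k then k + 1 else 0) + (if f τ + 1 = k then m + 1 - k else 0) := by
    intro τ
    rw [hcnt τ k]
    split_ifs <;> omega
  rw [Finset.sum_congr rfl fun τ _ => h3 τ, Finset.sum_add_distrib]
  congr 1
  · rw [← Finset.sum_filter, Finset.sum_const, smul_eq_mul, mul_comm]
  · by_cases hk : k = 0
    · rw [if_pos hk]
      rw [Finset.sum_eq_zero]
      intro τ _
      rw [if_neg (by omega)]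
    · rw [if_neg hk]
      have hsum : ∑ τ : Perm (Fin m), (if f τ + 1 = k then m + 1 - k else 0)
          = ∑ τ : Perm (Fin m), (if f τ = k - 1 then m + 1 - k else 0) :=
        Finset.sum_congr rfl fun τ _ => by
          have hiff : (f τ + 1 = k) ↔ (f τ = k - 1) := by omega
          simp only [hiff]
      rw [hsum, ← Finset.sum_filter, Finset.sum_const, smul_eq_mul, mul_comm]

end DEX

/-- `des` and `exc` are equidistributed on `S_n`. -/
theorem des_exc_equidistributed (n k : ℕ) :
    ((Finset.univ : Finset (Equiv.Perm (Fin n))).filter fun σ => des n σ = k).card =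
    ((Finset.univ : Finset (Equiv.Perm (Fin n))).filter fun σ => exc n σ = k).card := by
  classical
  induction n generalizing k with
  | zero =>
    have hd : ∀ σ : Equiv.Perm (Fin 0), des 0 σ = 0 := fun σ => by simp [des, DesSet]
    have hx : ∀ σ : Equiv.Perm (Fin 0), exc 0 σ = 0 := fun σ => by simp [exc]
    rcases Nat.eq_zero_or_pos k with rfl | hk
    · rw [Finset.filter_true_of_mem (fun σ _ => hd σ),
        Finset.filter_true_of_mem (fun σ _ => hx σ)]
    · rw [Finset.filter_false_of_mem (fun σ _ => by rw [hd σ]; omega),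
        Finset.filter_false_of_mem (fun σ _ => by rw [hx σ]; omega)]
  | succ m ih =>
    have hdes := DEX.step_count (des (m+1)) (des m) DEX.insD DEX.insD_bijective
      (fun τ k => by
        apply DEX.count_shape ((DesSet m τ).image (· + 1))
        · intro v hv
          rw [Finset.mem_image] at hv
          obtain ⟨q, hq, rfl⟩ := hv
          exact DEX.desSet_subset hq
        · rw [Finset.card_image_of_injective _ (fun a b h => by omega)]
          rfl
        · intro i
          exact DEX.des_insD τ i) k
    have hexc := DEX.step_count (exc (m+1)) (exc m) DEX.insE DEX.insE_bijective
      (fun τ k => by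
        apply DEX.count_shape (DEX.ExcSet m τ)
        · intro v hv
          exact DEX.excSet_subset hv
        · rw [DEX.exc_eq_card]
        · intro i
          exact DEX.exc_insE τ i) k
    rw [hdes, hexc, ih k]
    by_cases hk : k = 0
    · rw [if_pos hk, if_pos hk]
    · rw [if_neg hk, if_neg hk, ih (k-1)]
end

section
/- For every n, the map sending an n-cycle (c_1,...,c_{n−1},n) in S_n to the word c_{n−1}c_{n−2}...c_1 (a permutation of [n−1]) is a bijection from the set of n-cycles of S_n with j excedances onto the set of permutations of S_{n−1} with j−1 descents. In particular, the number of n-cycles with j excedances equals the Eulerian number a_{n−1,j−1}. -/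
/-!
Write `τ̂` for the extension of `τ ∈ Perm (Fin n)` to `Fin (n+1)` fixing the last point `n`, and `ρ`
for the rotation `k ↦ k + 1` of `Fin (n+1)`. The cycle whose word `c_n ⋯ c_1` is `τ` is
`τ̂ ρ⁻¹ τ̂⁻¹`, and every `(n+1)`-cycle has this form: it is conjugate to `ρ⁻¹`, and since `ρ⁻¹`
commutes with its powers the conjugator can be chosen to fix `n`. So `τ ↦ τ̂ ρ⁻¹ τ̂⁻¹` inverts the
map of the theorem.

The excedances of a conjugate `e π e⁻¹` are the `k` with `e k < e (π k)`. For `e = τ̂`, `π = ρ⁻¹`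
this holds for `k = 0`, fails for `k = n`, and for `0 < k < n` it says `τ k < τ (k - 1)`, a descent
of `τ`; hence `exc σ = des τ + 1`.
-/

open scoped Classical

open Equiv Equiv.Perm Finset

section FinRotate

variable {n : ℕ}

theorem coe_finRotate_pow_of_add_le {k : ℕ} {i : Fin (n + 1)} (h : i + k ≤ n) :
    ((finRotate (n + 1) ^ k) i : ℕ) = i + k := by
  induction k with
  | zero => simp
  | succ k ih =>
    rw [pow_succ', mul_apply, coe_finRotate_of_ne_last, ih (by omega), add_assoc]
    exact Fin.ne_of_val_ne (by rw [ih (by omega), Fin.val_last]; omega)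

theorem finRotate_pow_sub_apply_castSucc (p : Fin n) :
    (finRotate (n + 1) ^ (n - p)) p.castSucc = Fin.last n :=
  Fin.ext <| by rw [coe_finRotate_pow_of_add_le] <;> simp

theorem finRotate_inv_apply_succ (i : Fin n) : (finRotate (n + 1))⁻¹ i.succ = i.castSucc :=
  inv_eq_iff_eq.mpr <| Fin.ext <| by simp

theorem finRotate_inv_apply_zero : (finRotate (n + 1))⁻¹ 0 = Fin.last n :=
  inv_eq_iff_eq.mpr finRotate_last.symm

end FinRotate

namespace Equiv.Perm

theorem IsCycle.exists_conj_eq_and_apply_eq {α : Type*} [Finite α] {r σ : Perm α}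
    (hr : r.IsCycle) (h : IsConj r σ) {x y : α} (hx : r x ≠ x) (hy : σ y ≠ y) :
    ∃ e : Perm α, e * r * e⁻¹ = σ ∧ e x = y := by
  obtain ⟨c, rfl⟩ := _root_.isConj_iff.mp h
  have hy' : r (c⁻¹ y) ≠ c⁻¹ y := by
    contrapose! hy
    rw [mul_apply, mul_apply, hy]
    exact c.apply_symm_apply y
  obtain ⟨k, hk⟩ := hr.exists_pow_eq hx hy'
  refine ⟨c * r ^ k, ?_, by simp [hk]⟩
  group

variable {n : ℕ}

def extendLast (τ : Perm (Fin n)) : Perm (Fin (n + 1)) :=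
  finSuccEquivLast.symm.permCongr τ.optionCongr

@[simp]
theorem extendLast_castSucc (τ : Perm (Fin n)) (i : Fin n) :
    extendLast τ i.castSucc = (τ i).castSucc := by
  simp [extendLast, permCongr_apply, finSuccEquivLast_castSucc, finSuccEquivLast_symm_some]

@[simp]
theorem extendLast_last (τ : Perm (Fin n)) : extendLast τ (Fin.last n) = Fin.last n := by
  simp [extendLast, permCongr_apply, finSuccEquivLast_last]

theorem exists_extendLast_eq {e : Perm (Fin (n + 1))} (he : e (Fin.last n) = Fin.last n) :
    ∃ τ : Perm (Fin n), extendLast τ = e := by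
  set e' : Perm (Option (Fin n)) := finSuccEquivLast.permCongr e
  have he' : e' none = none := by simp [e', permCongr_apply, he, finSuccEquivLast_last]
  refine ⟨removeNone e', ?_⟩
  rw [extendLast, map_equiv_removeNone, he', swap_self, ← one_def, one_mul]
  ext x
  simp [e', permCongr_apply]

/-- The cycle `(τ (n-1), …, τ 1, τ 0, n)`, whose reversed word is `τ`. -/
def cycleOfWord (τ : Perm (Fin n)) : Perm (Fin (n + 1)) :=
  extendLast τ * (finRotate (n + 1))⁻¹ * (extendLast τ)⁻¹

theorem cycleOfWord_pow_apply_last (τ : Perm (Fin n)) (p : Fin n) :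
    (cycleOfWord τ ^ (n - p)) (Fin.last n) = (τ p).castSucc := by
  have hlast : (extendLast τ)⁻¹ (Fin.last n) = Fin.last n :=
    inv_eq_iff_eq.mpr (extendLast_last τ).symm
  have hrot : (finRotate (n + 1) ^ (n - p))⁻¹ (Fin.last n) = p.castSucc :=
    inv_eq_iff_eq.mpr (finRotate_pow_sub_apply_castSucc p).symm
  rw [cycleOfWord, conj_pow, inv_pow, mul_apply, mul_apply, hlast, hrot, extendLast_castSucc]

theorem cycleOfWord_injective : Function.Injective (cycleOfWord (n := n)) := by
  intro τ₁ τ₂ h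
  refine Equiv.ext fun p => Fin.castSucc_injective _ ?_
  simpa [cycleOfWord_pow_apply_last] using congr_arg (fun σ => (σ ^ (n - p)) (Fin.last n)) h

theorem isCycle_cycleOfWord (hn : 0 < n) (τ : Perm (Fin n)) : (cycleOfWord τ).IsCycle :=
  (isCycle_finRotate_of_le (by omega)).inv.conj

theorem support_cycleOfWord (hn : 0 < n) (τ : Perm (Fin n)) :
    (cycleOfWord τ).support = univ := by
  rw [cycleOfWord, support_conj, support_inv, support_finRotate_of_le (by omega)]
  simp

theorem exists_cycleOfWord_eq {σ : Perm (Fin (n + 1))} (hσ : σ.IsCycle)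
    (hsupp : σ.support = univ) : ∃ τ : Perm (Fin n), cycleOfWord τ = σ := by
  have hn : 2 ≤ n + 1 := by simpa [hsupp] using hσ.two_le_card_support
  have hr : (finRotate (n + 1))⁻¹.IsCycle := (isCycle_finRotate_of_le hn).inv
  have hr_supp : (finRotate (n + 1))⁻¹.support = univ := by
    rw [support_inv, support_finRotate_of_le hn]
  obtain ⟨e, rfl, he⟩ := hr.exists_conj_eq_and_apply_eq (hr.isConj hσ (by rw [hr_supp, hsupp]))
    (mem_support.mp (hr_supp ▸ mem_univ (Fin.last n))) (mem_support.mp (hsupp ▸ mem_univ _))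
  obtain ⟨τ, rfl⟩ := exists_extendLast_eq he
  exact ⟨τ, rfl⟩

end Equiv.Perm

theorem exc_eq_card_filter (m : ℕ) (σ : Perm (Fin m)) : exc m σ = #{i | i < σ i} := by
  rw [exc, ← card_map Fin.valEmbedding]
  congr 1
  ext i
  simp only [mem_filter, mem_map, mem_range, mem_univ, true_and, Fin.valEmbedding_apply]
  constructor
  · rintro ⟨-, h, hlt⟩
    exact ⟨⟨i, h⟩, hlt, rfl⟩
  · rintro ⟨i, hlt, rfl⟩
    exact ⟨i.isLt, i.isLt, hlt⟩

theorem des_succ_eq_card_filter (m : ℕ) (τ : Perm (Fin (m + 1))) :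
    des (m + 1) τ = #{i : Fin m | τ i.succ < τ i.castSucc} := by
  rw [des, DesSet, ← card_map Fin.valEmbedding]
  congr 1
  ext i
  rw [mem_filter, mem_map]
  simp only [mem_range, mem_filter, mem_univ, true_and, Fin.valEmbedding_apply]
  constructor
  · rintro ⟨-, h, h', hlt⟩
    exact ⟨⟨i, by omega⟩, hlt, rfl⟩
  · rintro ⟨i, hlt, rfl⟩
    exact ⟨by omega, by omega, by simp, hlt⟩

theorem exc_conj (m : ℕ) (e π : Perm (Fin m)) :
    exc m (e * π * e⁻¹) = #{k | e k < e (π k)} := by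
  rw [exc_eq_card_filter]
  refine card_equiv e.symm fun i => ?_
  rw [mem_filter, mem_filter]
  simp

theorem exc_cycleOfWord {n : ℕ} (hn : 0 < n) (τ : Perm (Fin n)) :
    exc (n + 1) (cycleOfWord τ) = des n τ + 1 := by
  obtain ⟨m, rfl⟩ := Nat.exists_eq_add_one_of_ne_zero hn.ne'
  rw [cycleOfWord, exc_conj, des_succ_eq_card_filter, card_filter, card_filter, Fin.sum_univ_succ,
    Fin.sum_univ_castSucc]
  simp only [finRotate_inv_apply_zero, finRotate_inv_apply_succ]
  simp only [Fin.succ_castSucc, Fin.succ_last, ← Fin.castSucc_zero, extendLast_castSucc,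
    extendLast_last, Fin.castSucc_lt_castSucc_iff, Fin.castSucc_lt_last, if_true,
    if_neg (Fin.le_last _).not_gt]
  omega

/-- (With `S_{n+1}` playing the role of `S_n` of the paper.)
Writing an `(n+1)`-cycle `σ` as `(c_1,…,c_n, n+1)` (so `c_i = σ^i(n+1)`), the map
`σ ↦ c_n c_{n−1} ⋯ c_1` (the word whose 0-based `p`-th letter is `σ^{n−p}(n+1)`)
is a bijection from the set of `(n+1)`-cycles with `j` excedances onto the set of
words of permutations `τ ∈ S_n` with `j−1` descents; in particular the number of
`(n+1)`-cycles with `j` excedances is the Eulerian number `a_{n,j−1}`. -/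
theorem cycle_word_bijection (n j : ℕ) (hn : 1 ≤ n) (hj : 1 ≤ j) :
    Set.BijOn
      (fun σ : Equiv.Perm (Fin (n + 1)) => fun p : Fin n => (σ ^ (n - p.val)) (Fin.last n))
      {σ : Equiv.Perm (Fin (n + 1)) |
        σ.IsCycle ∧ σ.support = Finset.univ ∧ exc (n + 1) σ = j}
      {w : Fin n → Fin (n + 1) |
        ∃ τ : Equiv.Perm (Fin n), des n τ = j - 1 ∧ w = fun p => Fin.castSucc (τ p)}
    ∧ Set.ncard {σ : Equiv.Perm (Fin (n + 1)) |
          σ.IsCycle ∧ σ.support = Finset.univ ∧ exc (n + 1) σ = j} =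
        Set.ncard {τ : Equiv.Perm (Fin n) | des n τ = j - 1} := by
  have hcycles : {σ : Perm (Fin (n + 1)) | σ.IsCycle ∧ σ.support = univ ∧ exc (n + 1) σ = j} =
      cycleOfWord '' {τ | des n τ = j - 1} := by
    ext σ
    constructor
    · rintro ⟨hσ, hsupp, hexc⟩
      obtain ⟨τ, rfl⟩ := exists_cycleOfWord_eq hσ hsupp
      rw [exc_cycleOfWord hn] at hexc
      exact ⟨τ, show des n τ = j - 1 by omega, rfl⟩
    · rintro ⟨τ, hτ : des n τ = j - 1, rfl⟩
      exact ⟨isCycle_cycleOfWord hn τ, support_cycleOfWord hn τ, by rw [exc_cycleOfWord hn]; omega⟩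
  have hword : (fun σ : Perm (Fin (n + 1)) => fun p : Fin n => (σ ^ (n - p.val)) (Fin.last n)) ∘
      cycleOfWord = fun τ p => (τ p).castSucc :=
    funext fun τ => funext (cycleOfWord_pow_apply_last τ)
  have hword_injective : Function.Injective fun (τ : Perm (Fin n)) p => (τ p).castSucc :=
    fun τ₁ τ₂ h => Equiv.ext fun p => Fin.castSucc_injective _ (congr_fun h p)
  rw [hcycles]
  refine ⟨?_, Set.ncard_image_of_injective _ cycleOfWord_injective⟩
  convert (Set.InjOn.image_of_comp (hword ▸ hword_injective.injOn)).bijOn_image using 1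
  rw [Set.image_image]
  ext w
  simp [cycleOfWord_pow_apply_last, eq_comm]
end

section
/- Let λ be a partition of n with exactly k parts equal to 1. Then for all j, a_{λ,j}(q,p) = a_{λ,n−k−j}(1/q, q^n p), where a_{λ,j}(q,p) = Σ q^{maj(σ)} p^{des(σ)} over permutations σ ∈ S_n of cycle type λ with exc(σ) = j. -/
open scoped Classical

/-- Major index. -/
noncomputable def maj (n : ℕ) (σ : Equiv.Perm (Fin n)) : ℕ :=
  ∑ i ∈ DesSet n σ, (i + 1)

/-- A permutation `σ ∈ S_n` has cycle type the partition `lam` of `n`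
(where `lam` records *all* cycle lengths, including fixed points as parts
equal to `1`) iff `σ.cycleType` equals the multiset of parts of `lam` of
size at least `2`. -/
def HasCycleType (n : ℕ) (σ : Equiv.Perm (Fin n)) (lam : Multiset ℕ) : Prop :=
  σ.cycleType = lam.filter (2 ≤ ·)

namespace CTEMS

variable {n : ℕ}

/-- Conjugation by the reversal permutation. -/
noncomputable def F (n : ℕ) (σ : Equiv.Perm (Fin n)) : Equiv.Perm (Fin n) :=
  Fin.revPerm * σ * Fin.revPerm

lemma F_apply (σ : Equiv.Perm (Fin n)) (x : Fin n) : F n σ x = (σ x.rev).rev := by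
  simp [F, Equiv.Perm.mul_apply]

lemma F_invol (σ : Equiv.Perm (Fin n)) : F n (F n σ) = σ := by
  ext x
  simp [F_apply, Fin.rev_rev]

lemma mem_DesSet {σ : Equiv.Perm (Fin n)} {i : ℕ} :
    i ∈ DesSet n σ ↔ ∃ h2 : i + 1 < n, σ ⟨i + 1, h2⟩ < σ ⟨i, Nat.lt_of_succ_lt h2⟩ := by
  simp only [DesSet, Finset.mem_filter, Finset.mem_range]
  constructor
  · rintro ⟨-, h1, h2, h⟩; exact ⟨h2, h⟩
  · rintro ⟨h2, h⟩; exact ⟨Nat.lt_of_succ_lt h2, Nat.lt_of_succ_lt h2, h2, h⟩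

lemma key {σ : Equiv.Perm (Fin n)} {i : ℕ} (h2 : i + 1 < n) :
    i ∈ DesSet n (F n σ) ↔ n - 2 - i ∈ DesSet n σ := by
  have hm2 : (n - 2 - i) + 1 < n := by omega
  have e1 : (⟨i, Nat.lt_of_succ_lt h2⟩ : Fin n).rev
      = ⟨(n - 2 - i) + 1, hm2⟩ := by
    ext; simp [Fin.val_rev]; omega
  have e2 : (⟨i + 1, h2⟩ : Fin n).rev = ⟨n - 2 - i, Nat.lt_of_succ_lt hm2⟩ := by
    ext; simp [Fin.val_rev]; omega
  have core : (F n σ ⟨i + 1, h2⟩ < F n σ ⟨i, Nat.lt_of_succ_lt h2⟩)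
      ↔ σ ⟨(n - 2 - i) + 1, hm2⟩ < σ ⟨n - 2 - i, Nat.lt_of_succ_lt hm2⟩ := by
    rw [F_apply, F_apply, Fin.rev_lt_rev, e1, e2]
  rw [mem_DesSet, mem_DesSet]
  constructor
  · rintro ⟨hx, h⟩; exact ⟨hm2, core.mp h⟩
  · rintro ⟨hx, h⟩; exact ⟨h2, core.mpr h⟩

lemma desSet_F (σ : Equiv.Perm (Fin n)) :
    DesSet n (F n σ) = (DesSet n σ).image (fun m => n - 2 - m) := by
  ext i
  rw [Finset.mem_image]
  constructor
  · intro hi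
    obtain ⟨h2, -⟩ := mem_DesSet.mp hi
    exact ⟨n - 2 - i, (key h2).mp hi, by omega⟩
  · rintro ⟨m, hm, rfl⟩
    obtain ⟨hm2, -⟩ := mem_DesSet.mp hm
    have h2 : (n - 2 - m) + 1 < n := by omega
    have : n - 2 - (n - 2 - m) = m := by omega
    rw [key h2, this]
    exact hm

lemma desSet_injOn (σ : Equiv.Perm (Fin n)) :
    Set.InjOn (fun m => n - 2 - m) (DesSet n σ) := by
  intro a ha b hb hab
  obtain ⟨ha2, -⟩ := mem_DesSet.mp ha
  obtain ⟨hb2, -⟩ := mem_DesSet.mp hb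
  simp only at hab
  omega

lemma des_F (σ : Equiv.Perm (Fin n)) : des n (F n σ) = des n σ := by
  rw [des, des, desSet_F, Finset.card_image_of_injOn (desSet_injOn σ)]

lemma maj_F (σ : Equiv.Perm (Fin n)) : maj n (F n σ) + maj n σ = n * des n σ := by
  rw [maj, maj, desSet_F, Finset.sum_image (desSet_injOn σ), des, ← Finset.sum_add_distrib]
  have hpt : ∀ m ∈ DesSet n σ, (n - 2 - m + 1) + (m + 1) = n := by
    intro m hm
    obtain ⟨hm2, -⟩ := mem_DesSet.mp hm
    omega
  rw [Finset.sum_congr rfl hpt, Finset.sum_const, smul_eq_mul, mul_comm]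

lemma card_filter_range (P : Fin n → Prop) :
    ((Finset.range n).filter fun i => ∃ h : i < n, P ⟨i, h⟩).card
      = (Finset.univ.filter P).card := by
  have himg : ((Finset.range n).filter fun i => ∃ h : i < n, P ⟨i, h⟩)
      = (Finset.univ.filter P).image Fin.val := by
    ext i
    simp only [Finset.mem_filter, Finset.mem_range, Finset.mem_image, Finset.mem_univ, true_and]
    constructor
    · rintro ⟨h, hh, hp⟩; exact ⟨⟨i, h⟩, hp, rfl⟩
    · rintro ⟨a, hp, rfl⟩; exact ⟨a.2, a.2, hp⟩
  rw [himg, Finset.card_image_of_injective _ Fin.val_injective]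

lemma exc_eq (σ : Equiv.Perm (Fin n)) :
    exc n σ = (Finset.univ.filter fun i : Fin n => i < σ i).card := by
  have hset : ((Finset.range n).filter fun i => ∃ h : i < n, i < (σ ⟨i, h⟩ : ℕ))
      = ((Finset.range n).filter fun i => ∃ h : i < n, (⟨i, h⟩ : Fin n) < σ ⟨i, h⟩) := by
    ext i
    simp [Fin.lt_def]
  rw [exc, hset]
  convert card_filter_range (fun a : Fin n => a < σ a) using 3

lemma exc_F (σ : Equiv.Perm (Fin n)) :
    exc n (F n σ) = (Finset.univ.filter fun i : Fin n => σ i < i).card := by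
  rw [exc_eq]
  have himg : (Finset.univ.filter fun i : Fin n => i < F n σ i)
      = (Finset.univ.filter fun a : Fin n => σ a < a).image Fin.rev := by
    ext i
    simp only [Finset.mem_filter, Finset.mem_univ, true_and, Finset.mem_image, F_apply]
    constructor
    · intro h
      exact ⟨i.rev, Fin.lt_rev_iff.mp h, Fin.rev_rev i⟩
    · rintro ⟨a, h, rfl⟩
      rw [Fin.rev_rev]
      exact Fin.lt_rev_iff.mpr (by rwa [Fin.rev_rev])
  rw [himg, Finset.card_image_of_injective _ Fin.rev_injective]

lemma tri (σ : Equiv.Perm (Fin n)) :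
    (Finset.univ.filter fun i : Fin n => i < σ i).card
      + (Finset.univ.filter fun i : Fin n => σ i < i).card
      + (Finset.univ.filter fun i : Fin n => σ i = i).card = n := by
  have h1 := Finset.card_filter_add_card_filter_not
    (s := (Finset.univ : Finset (Fin n))) (p := fun i => i < σ i)
  have h2 : (Finset.univ.filter fun i : Fin n => ¬ i < σ i)
      = (Finset.univ.filter fun i : Fin n => σ i < i)
        ∪ (Finset.univ.filter fun i : Fin n => σ i = i) := by
    ext i
    simp only [Finset.mem_filter, Finset.mem_univ, true_and, Finset.mem_union, not_lt,
      le_iff_lt_or_eq]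
  have hdisj : Disjoint (Finset.univ.filter fun i : Fin n => σ i < i)
      (Finset.univ.filter fun i : Fin n => σ i = i) := by
    rw [Finset.disjoint_left]
    intro i hi hj
    simp only [Finset.mem_filter, Finset.mem_univ, true_and] at hi hj
    exact absurd hj (ne_of_lt hi)
  rw [h2, Finset.card_union_of_disjoint hdisj] at h1
  simp only [Finset.card_univ, Fintype.card_fin] at h1
  omega

lemma fix_card (σ : Equiv.Perm (Fin n)) :
    (Finset.univ.filter fun i : Fin n => σ i = i).card + σ.support.card = n := by
  have hs : σ.support = Finset.univ.filter fun i : Fin n => ¬ σ i = i := by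
    ext i; simp [Equiv.Perm.mem_support]
  rw [hs, Finset.card_filter_add_card_filter_not, Finset.card_univ, Fintype.card_fin]

lemma count_sum {lam : Multiset ℕ} (hpos : ∀ x ∈ lam, 0 < x) :
    lam.count 1 + (lam.filter (2 ≤ ·)).sum = lam.sum := by
  conv_rhs => rw [← Multiset.filter_add_not (· = 1) lam]
  rw [Multiset.sum_add]
  congr 1
  · rw [Multiset.filter_eq', Multiset.sum_replicate, smul_eq_mul, mul_one]
  · congr 1
    apply Multiset.filter_congr
    intro x hx
    have := hpos x hx
    constructor <;> intro h <;> omega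

end CTEMS

/-- Let `λ ⊢ n` have exactly `k` parts equal to `1`.  Then
`a_{λ,j}(q,p) = a_{λ,n−k−j}(1/q, qⁿp)` — an identity of Laurent polynomials in
`q` with polynomial coefficients in `p`, stated here over an arbitrary
commutative ring with `q` a unit. -/
theorem cycle_type_euler_mahonian_symmetry
    {R : Type*} [CommRing R] (q : Rˣ) (p : R)
    (n k j : ℕ) (lam : Multiset ℕ)
    (hsum : lam.sum = n) (hpos : ∀ x ∈ lam, 0 < x)
    (hones : lam.count 1 = k) (hj : j ≤ n - k) :
    (∑ σ ∈ (Finset.univ : Finset (Equiv.Perm (Fin n))).filter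
        (fun σ => HasCycleType n σ lam ∧ exc n σ = j),
        (q : R) ^ maj n σ * p ^ des n σ) =
    ∑ σ ∈ (Finset.univ : Finset (Equiv.Perm (Fin n))).filter
        (fun σ => HasCycleType n σ lam ∧ exc n σ = n - k - j),
        ((q⁻¹ : Rˣ) : R) ^ maj n σ * ((q : R) ^ n * p) ^ des n σ := by
  classical
  have hkn : k + (lam.filter (2 ≤ ·)).sum = n := by
    have h := CTEMS.count_sum hpos
    omega
  have hct_F : ∀ σ : Equiv.Perm (Fin n), HasCycleType n σ lam →
      HasCycleType n (CTEMS.F n σ) lam := by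
    intro σ hct
    have hinv : (Fin.revPerm : Equiv.Perm (Fin n))⁻¹ = Fin.revPerm := rfl
    unfold HasCycleType CTEMS.F
    rw [show Fin.revPerm * σ * (Fin.revPerm : Equiv.Perm (Fin n))
        = Fin.revPerm * σ * (Fin.revPerm : Equiv.Perm (Fin n))⁻¹ by rw [hinv],
      Equiv.Perm.cycleType_conj]
    exact hct
  have hfix : ∀ σ : Equiv.Perm (Fin n), HasCycleType n σ lam →
      exc n σ + exc n (CTEMS.F n σ) + k = n := by
    intro σ hct
    have h1 := CTEMS.tri σ
    have h2 := CTEMS.fix_card σ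
    have h3 : σ.support.card = (lam.filter (2 ≤ ·)).sum := by
      rw [← Equiv.Perm.sum_cycleType, hct]
    rw [CTEMS.exc_eq, CTEMS.exc_F]
    omega
  refine Finset.sum_nbij' (CTEMS.F n) (CTEMS.F n) ?_ ?_ ?_ ?_ ?_
  · intro σ hσ
    rw [Finset.mem_filter] at hσ ⊢
    obtain ⟨-, hct, he⟩ := hσ
    have := hfix σ hct
    exact ⟨Finset.mem_univ _, hct_F σ hct, by omega⟩
  · intro σ hσ
    rw [Finset.mem_filter] at hσ ⊢
    obtain ⟨-, hct, he⟩ := hσ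
    have := hfix σ hct
    exact ⟨Finset.mem_univ _, hct_F σ hct, by omega⟩
  · intro σ hσ
    exact CTEMS.F_invol σ
  · intro σ hσ
    exact CTEMS.F_invol σ
  · intro σ hσ
    rw [CTEMS.des_F]
    have hm := CTEMS.maj_F σ
    have key : ((q⁻¹ : Rˣ) : R) ^ (maj n (CTEMS.F n σ)) * ((q : R) ^ n) ^ (des n σ)
        = (q : R) ^ (maj n σ) := by
      rw [← pow_mul, ← hm, pow_add, ← mul_assoc, ← mul_pow, Units.inv_mul, one_pow, one_mul]
    rw [mul_pow, ← mul_assoc, key]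
end
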